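/- Let Σ be a finite alphabet, let # be a symbol not in Σ, let N be a natural number, and let L₁, L₂ ⊆ Σ* be regular languages. Then the language { x · # · reverse(y) : x ∈ L₁, y ∈ L₂, and the edit distance between x and y is at most N } is generated by a linear context-free grammar. -/

import Mathlib

/-- Costs for the Levenshtein edit distance (removed from Mathlib; restored with its old meaning). -/
structure Levenshtein.Cost (α β δ : Type*) where
  delete : α → δ
  insert : β → δ
  substitute : α → β → δ

/-- The default cost structure: each operation costs 1, substituting a symbol by itself costs 0. -/
def Levenshtein.defaultCost {α : Type*} [DecidableEq α] : Levenshtein.Cost α α ℕ where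
  delete _ := 1
  insert _ := 1
  substitute a b := if a = b then 0 else 1

/-- The Levenshtein distance, by the recursion characterising the old Mathlib definition. -/
def levenshtein {α β δ : Type*} [AddZeroClass δ] [Min δ] (C : Levenshtein.Cost α β δ) :
    List α → List β → δ
  | [], [] => 0
  | [], y :: ys => C.insert y + levenshtein C [] ys
  | x :: xs, [] => C.delete x + levenshtein C xs []
  | x :: xs, y :: ys =>
      min (C.delete x + levenshtein C xs (y :: ys))
        (min (C.insert y + levenshtein C (x :: xs) ys) (C.substitute x y + levenshtein C xs ys))

/-- A context-free grammar is *linear* if every production contains at most one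
nonterminal in its right-hand side. -/
def IsLinearCFG {T : Type} (g : ContextFreeGrammar T) : Prop :=
  ∀ r ∈ g.rules,
    (r.output.countP fun s =>
      match s with
      | Symbol.nonterminal _ => true
      | Symbol.terminal _ => false) ≤ 1

/-!
The edit distance of `x` and `y` is the least cost of an alignment of the two words. Reading an
alignment of `x` and `y` column by column consumes both words from the front, so in
`x # reverse(y)` it consumes the two sides from the outside towards `#`. A single nonterminal in
the middle can therefore emit one column per step through a linear rule `A → a B b`. The
nonterminal records the states of DFAs for `L₁` and `L₂` on the two words emitted so far and the
cost spent so far; rules are only allowed while that cost is at most `N`, which keeps the grammar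
finite.
-/

namespace Levenshtein

/-- An alignment of two words, as its list of columns: `(some a, none)` deletes `a`,
`(none, some b)` inserts `b`, `(some a, some b)` substitutes `b` for `a`, and `(none, none)`
is an empty column. -/
abbrev Alignment (α β : Type*) := List (Option α × Option β)

namespace Alignment

variable {α β δ : Type*}

def upper (p : Alignment α β) : List α := p.flatMap fun c => c.1.toList

def lower (p : Alignment α β) : List β := p.flatMap fun c => c.2.toList

def columnCost [Zero δ] (C : Cost α β δ) : Option α × Option β → δ
  | (none, none) => 0
  | (some a, none) => C.delete a
  | (none, some b) => C.insert b
  | (some a, some b) => C.substitute a b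

def cost [AddCommMonoid δ] (C : Cost α β δ) (p : Alignment α β) : δ :=
  (p.map (columnCost C)).sum

@[simp] theorem upper_nil : upper ([] : Alignment α β) = [] := rfl
@[simp] theorem lower_nil : lower ([] : Alignment α β) = [] := rfl
@[simp] theorem cost_nil [AddCommMonoid δ] (C : Cost α β δ) : cost C [] = 0 := rfl

@[simp] theorem upper_cons (c : Option α × Option β) (p : Alignment α β) :
    upper (c :: p) = c.1.toList ++ upper p := rfl

@[simp] theorem lower_cons (c : Option α × Option β) (p : Alignment α β) :
    lower (c :: p) = c.2.toList ++ lower p := rfl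

@[simp] theorem cost_cons [AddCommMonoid δ] (C : Cost α β δ) (c : Option α × Option β)
    (p : Alignment α β) : cost C (c :: p) = columnCost C c + cost C p := by
  simp [cost]

@[simp] theorem upper_append (p p' : Alignment α β) : upper (p ++ p') = upper p ++ upper p' := by
  simp [upper]

@[simp] theorem lower_append (p p' : Alignment α β) : lower (p ++ p') = lower p ++ lower p' := by
  simp [lower]

@[simp] theorem cost_append [AddCommMonoid δ] (C : Cost α β δ) (p p' : Alignment α β) :
    cost C (p ++ p') = cost C p + cost C p' := by
  simp [cost]

end Alignment

end Levenshtein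

section Alignment

open Levenshtein Alignment

variable {α β δ : Type*}

theorem levenshtein_column_le [AddZeroClass δ] [LinearOrder δ] (C : Cost α β δ)
    (c : Option α × Option β) (x : List α) (y : List β) :
    levenshtein C (c.1.toList ++ x) (c.2.toList ++ y) ≤
      columnCost C c + levenshtein C x y := by
  obtain ⟨_ | a, _ | b⟩ := c
  · simp [columnCost]
  · cases x <;> simp [levenshtein, columnCost]
  · cases y <;> simp [levenshtein, columnCost]
  · simp [levenshtein, columnCost]

theorem levenshtein_le_cost [AddCommMonoid δ] [LinearOrder δ] [IsOrderedAddMonoid δ]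
    (C : Cost α β δ) (p : Alignment α β) :
    levenshtein C (upper p) (lower p) ≤ cost C p := by
  induction p with
  | nil => simp [levenshtein]
  | cons c p ih =>
    calc levenshtein C (c.1.toList ++ upper p) (c.2.toList ++ lower p)
        _ ≤ columnCost C c + levenshtein C (upper p) (lower p) := levenshtein_column_le ..
        _ ≤ cost C (c :: p) := by rw [cost_cons]; gcongr

theorem exists_alignment_cost_eq_levenshtein [AddCommMonoid δ] [LinearOrder δ]
    (C : Cost α β δ) (x : List α) (y : List β) :
    ∃ p : Alignment α β, upper p = x ∧ lower p = y ∧ cost C p = levenshtein C x y := by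
  have extend : ∀ c x' y', (∃ p : Alignment α β, upper p = x' ∧ lower p = y' ∧
      cost C p = levenshtein C x' y') → ∃ p : Alignment α β, upper p = c.1.toList ++ x' ∧
      lower p = c.2.toList ++ y' ∧ cost C p = columnCost C c + levenshtein C x' y' := by
    rintro c _ _ ⟨p, rfl, rfl, hp⟩
    exact ⟨c :: p, rfl, rfl, by rw [cost_cons, hp]⟩
  induction x generalizing y with
  | nil =>
    induction y with
    | nil => exact ⟨[], rfl, rfl, by simp [levenshtein]⟩
    | cons b y ih => simpa [levenshtein, columnCost] using extend (none, some b) _ _ ih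
  | cons a x ihx =>
    induction y with
    | nil => simpa [levenshtein, columnCost] using extend (some a, none) _ _ (ihx [])
    | cons b y ihy =>
      rw [levenshtein]
      rcases min_choice (C.delete a + levenshtein C x (b :: y))
          (min (C.insert b + levenshtein C (a :: x) y) (C.substitute a b + levenshtein C x y))
        with h | h <;> rw [h]
      · simpa [columnCost] using extend (some a, none) _ _ (ihx (b :: y))
      rcases min_choice (C.insert b + levenshtein C (a :: x) y)
          (C.substitute a b + levenshtein C x y) with h | h <;> rw [h]
      · simpa [columnCost] using extend (none, some b) _ _ ihy
      · simpa [columnCost] using extend (some a, some b) _ _ (ihx y)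

theorem levenshtein_le_iff [AddCommMonoid δ] [LinearOrder δ] [IsOrderedAddMonoid δ]
    (C : Cost α β δ) (x : List α) (y : List β) (k : δ) :
    levenshtein C x y ≤ k ↔
      ∃ p : Alignment α β, upper p = x ∧ lower p = y ∧ cost C p ≤ k := by
  constructor
  · intro h
    obtain ⟨p, hx, hy, hp⟩ := exists_alignment_cost_eq_levenshtein C x y
    exact ⟨p, hx, hy, hp ▸ h⟩
  · rintro ⟨p, rfl, rfl, hp⟩
    exact (levenshtein_le_cost C p).trans hp

end Alignment

namespace EditDistanceGrammar

section Frame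

variable {α : Type} {NT : Type}

def frame (x : List α) (s : Symbol (Option α) NT) (y : List α) : List (Symbol (Option α) NT) :=
  x.map (Symbol.terminal ∘ some) ++ s :: (y.map (Symbol.terminal ∘ some)).reverse

theorem append_frame_append (x u y v : List α) (s : Symbol (Option α) NT) :
    x.map (Symbol.terminal ∘ some) ++ frame u s v ++ (y.map (Symbol.terminal ∘ some)).reverse =
      frame (x ++ u) s (y ++ v) := by
  simp [frame]

theorem frame_terminal_none (x y : List α) :
    (frame x (Symbol.terminal none) y : List (Symbol (Option α) NT)) =
      (x.map some ++ none :: (y.map some).reverse).map Symbol.terminal := by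
  simp [frame, List.map_reverse]

theorem frame_eq_append_nonterminal {x y : List α} {s : Symbol (Option α) NT} {A : NT}
    {P Q : List (Symbol (Option α) NT)} (h : frame x s y = P ++ [Symbol.nonterminal A] ++ Q) :
    s = Symbol.nonterminal A ∧ P = x.map (Symbol.terminal ∘ some) ∧
      Q = (y.map (Symbol.terminal ∘ some)).reverse := by
  rw [frame, List.append_assoc, List.singleton_append,
    List.append_cons_inj_of_notMem (by simp) (by simp)] at h
  exact ⟨h.2.1, h.1.symm, h.2.2.symm⟩

variable {g : ContextFreeGrammar (Option α)}

theorem produces_frame {r : ContextFreeRule (Option α) g.NT} (hr : r ∈ g.rules) {u v : List α}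
    {s : Symbol (Option α) g.NT} (hout : r.output = frame u s v) (x y : List α) :
    g.Produces (frame x (Symbol.nonterminal r.input) y) (frame (x ++ u) s (y ++ v)) := by
  refine ⟨r, hr, ?_⟩
  rw [← append_frame_append, ← hout]
  simpa [frame] using r.rewrites_of_exists_parts _ _

theorem exists_rule_of_produces_frame {x y : List α} {s : Symbol (Option α) g.NT}
    {t : List (Symbol (Option α) g.NT)} (h : g.Produces (frame x s y) t) :
    ∃ r ∈ g.rules, s = Symbol.nonterminal r.input ∧
      t = x.map (Symbol.terminal ∘ some) ++ r.output ++
        (y.map (Symbol.terminal ∘ some)).reverse := by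
  obtain ⟨r, hr, hrw⟩ := h
  obtain ⟨P, Q, hs, rfl⟩ := hrw.exists_parts
  obtain ⟨rfl, rfl, rfl⟩ := frame_eq_append_nonterminal hs
  exact ⟨r, hr, rfl, rfl⟩

end Frame

open Levenshtein Alignment

variable {α σ₁ σ₂ : Type} (C : Cost α α ℕ) (M₁ : DFA α σ₁) (M₂ : DFA α σ₂) (N : ℕ)

/-- The nonterminal `(q₁, q₂, k)` records the states reached by `M₁` and `M₂` on the two words
generated so far and the cost of the alignment generating them. -/
def columnRule (q : σ₁ × σ₂ × ℕ) (c : Option α × Option α) :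
    ContextFreeRule (Option α) (σ₁ × σ₂ × ℕ) :=
  ⟨q, frame c.1.toList (Symbol.nonterminal (M₁.evalFrom q.1 c.1.toList,
    M₂.evalFrom q.2.1 c.2.toList, q.2.2 + columnCost C c)) c.2.toList⟩

def finalRule (q : σ₁ × σ₂ × ℕ) : ContextFreeRule (Option α) (σ₁ × σ₂ × ℕ) :=
  ⟨q, [Symbol.terminal none]⟩

def IsRule (r : ContextFreeRule (Option α) (σ₁ × σ₂ × ℕ)) : Prop :=
  (∃ q c, q.2.2 + columnCost C c ≤ N ∧ r = columnRule C M₁ M₂ q c) ∨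
    ∃ q : σ₁ × σ₂ × ℕ, q.1 ∈ M₁.accept ∧ q.2.1 ∈ M₂.accept ∧ q.2.2 ≤ N ∧ r = finalRule q

theorem finite_setOf_isRule [Finite α] [Finite σ₁] [Finite σ₂] :
    {r | IsRule C M₁ M₂ N r}.Finite := by
  refine ((Set.finite_range fun t : (σ₁ × σ₂ × Fin (N + 1)) × (Option α × Option α) =>
    columnRule C M₁ M₂ (t.1.1, t.1.2.1, t.1.2.2) t.2).union
      (Set.finite_range fun q : σ₁ × σ₂ × Fin (N + 1) =>
        finalRule (α := α) (q.1, q.2.1, q.2.2))).subset ?_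
  rintro r (⟨⟨q₁, q₂, k⟩, c, hk, rfl⟩ | ⟨⟨q₁, q₂, k⟩, -, -, hk, rfl⟩)
  · exact Or.inl ⟨((q₁, q₂, ⟨k, by simp only at hk; omega⟩), c), rfl⟩
  · exact Or.inr ⟨(q₁, q₂, ⟨k, by simp only at hk; omega⟩), rfl⟩

noncomputable abbrev grammar [Finite α] [Finite σ₁] [Finite σ₂] :
    ContextFreeGrammar (Option α) where
  NT := σ₁ × σ₂ × ℕ
  initial := (M₁.start, M₂.start, 0)
  rules := (finite_setOf_isRule C M₁ M₂ N).toFinset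

variable [Finite α] [Finite σ₁] [Finite σ₂]

theorem mem_rules_grammar {r : ContextFreeRule (Option α) (σ₁ × σ₂ × ℕ)} :
    r ∈ (grammar C M₁ M₂ N).rules ↔ IsRule C M₁ M₂ N r :=
  Set.Finite.mem_toFinset _

theorem isLinearCFG_grammar : IsLinearCFG (grammar C M₁ M₂ N) := by
  intro r hr
  rcases (mem_rules_grammar C M₁ M₂ N).1 hr with ⟨q, c, -, rfl⟩ | ⟨q, -, -, -, rfl⟩ <;>
    simp [columnRule, finalRule, frame, Function.comp_def]

theorem output_ne_nil_of_mem_rules_grammar :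
    ∀ r ∈ (grammar C M₁ M₂ N).rules, r.output ≠ [] := by
  intro r hr
  rcases (mem_rules_grammar C M₁ M₂ N).1 hr with ⟨q, c, -, rfl⟩ | ⟨q, -, -, -, rfl⟩ <;>
    simp [columnRule, finalRule, frame]

theorem derives_frame_of_alignment (p : Alignment α α) {q : σ₁ × σ₂ × ℕ}
    (hcost : q.2.2 + cost C p ≤ N) (h₁ : M₁.evalFrom q.1 (upper p) ∈ M₁.accept)
    (h₂ : M₂.evalFrom q.2.1 (lower p) ∈ M₂.accept) (x y : List α) :
    (grammar C M₁ M₂ N).Derives (frame x (Symbol.nonterminal q) y)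
      (frame (x ++ upper p) (Symbol.terminal none) (y ++ lower p)) := by
  induction p generalizing q x y with
  | nil =>
    have hr : finalRule q ∈ (grammar C M₁ M₂ N).rules :=
      (mem_rules_grammar C M₁ M₂ N).2 (Or.inr ⟨q, h₁, h₂, by simpa using hcost, rfl⟩)
    simpa [finalRule] using (produces_frame hr (u := []) (v := []) rfl x y).single
  | cons c p ih =>
    have hr : columnRule C M₁ M₂ q c ∈ (grammar C M₁ M₂ N).rules :=
      (mem_rules_grammar C M₁ M₂ N).2 (Or.inl ⟨q, c, by rw [cost_cons] at hcost; omega, rfl⟩)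
    refine (produces_frame hr rfl x y).trans_derives ?_
    simp only [upper_cons, lower_cons, ← List.append_assoc]
    refine ih ?_ ?_ ?_ _ _
    · simpa [add_assoc] using hcost
    · simpa [DFA.evalFrom_of_append] using h₁
    · simpa [DFA.evalFrom_of_append] using h₂

def Invariant (s : List (Symbol (Option α) (σ₁ × σ₂ × ℕ))) : Prop :=
  ∃ p : Alignment α α, cost C p ≤ N ∧
    (s = frame (upper p) (Symbol.nonterminal (M₁.eval (upper p), M₂.eval (lower p), cost C p))
        (lower p) ∨
      s = frame (upper p) (Symbol.terminal none) (lower p) ∧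
        upper p ∈ M₁.accepts ∧ lower p ∈ M₂.accepts)

theorem Invariant.produces {s t : List (Symbol (Option α) (σ₁ × σ₂ × ℕ))}
    (hs : Invariant C M₁ M₂ N s) (h : (grammar C M₁ M₂ N).Produces s t) :
    Invariant C M₁ M₂ N t := by
  obtain ⟨p, hp, rfl | ⟨rfl, -⟩⟩ := hs
  swap
  · obtain ⟨r, -, ⟨⟩, -⟩ := exists_rule_of_produces_frame h
  obtain ⟨r, hr, hin, rfl⟩ := exists_rule_of_produces_frame h
  rcases (mem_rules_grammar C M₁ M₂ N).1 hr with ⟨q, c, hc, rfl⟩ | ⟨q, h₁, h₂, -, rfl⟩ <;>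
    obtain rfl : _ = q := Symbol.nonterminal.inj hin
  · refine ⟨p ++ [c], by simpa using hc, Or.inl ?_⟩
    simp only [columnRule, append_frame_append]
    simp [DFA.eval, DFA.evalFrom_of_append]
  · refine ⟨p, hp, Or.inr ⟨?_, h₁, h₂⟩⟩
    exact (append_frame_append (upper p) [] (lower p) [] (Symbol.terminal none)).trans (by simp)

theorem Invariant.derives {s t : List (Symbol (Option α) (σ₁ × σ₂ × ℕ))}
    (hs : Invariant C M₁ M₂ N s) (h : (grammar C M₁ M₂ N).Derives s t) :
    Invariant C M₁ M₂ N t := by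
  induction h with
  | refl => exact hs
  | tail _ hstep ih => exact ih.produces C M₁ M₂ N hstep

theorem language_grammar : (grammar C M₁ M₂ N).language =
    {w | ∃ p : Alignment α α, upper p ∈ M₁.accepts ∧ lower p ∈ M₂.accepts ∧ cost C p ≤ N ∧
      w = (upper p).map some ++ none :: ((lower p).map some).reverse} := by
  ext w
  rw [ContextFreeGrammar.mem_language_iff]
  constructor
  · intro h
    have hinit : Invariant C M₁ M₂ N [Symbol.nonterminal (M₁.start, M₂.start, 0)] :=
      ⟨[], by simp, Or.inl rfl⟩
    obtain ⟨p, hp, hw | ⟨hw, h₁, h₂⟩⟩ := hinit.derives C M₁ M₂ N h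
    · have : Symbol.nonterminal (M₁.eval (upper p), M₂.eval (lower p), cost C p) ∈
          w.map Symbol.terminal := by rw [hw]; simp [frame]
      simp at this
    · rw [frame_terminal_none] at hw
      exact ⟨p, h₁, h₂, hp, List.map_injective_iff.2 (fun _ _ => Symbol.terminal.inj) hw⟩
  · rintro ⟨p, h₁, h₂, hp, rfl⟩
    simpa [frame] using
      derives_frame_of_alignment C M₁ M₂ N p (q := (M₁.start, M₂.start, 0)) (by simpa using hp)
        h₁ h₂ [] []

end EditDistanceGrammar

/-- The terminal alphabet `Σ ∪ {#}` is modelled as `Option α`, with `# = none`. -/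
theorem editDistance_inter_regular_isLinear
    {α : Type} [Fintype α] [DecidableEq α] (N : ℕ) (L₁ L₂ : Language α)
    (h₁ : L₁.IsRegular) (h₂ : L₂.IsRegular) :
    ∃ g : ContextFreeGrammar (Option α),
      IsLinearCFG g ∧ (∀ r ∈ g.rules, r.output ≠ []) ∧
      g.language =
        { w : List (Option α) | ∃ x y : List α,
            x ∈ L₁ ∧ y ∈ L₂ ∧
            levenshtein Levenshtein.defaultCost x y ≤ N ∧
            w = x.map some ++ none :: (y.map some).reverse } := by
  obtain ⟨σ₁, _, M₁, rfl⟩ := h₁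
  obtain ⟨σ₂, _, M₂, rfl⟩ := h₂
  refine ⟨EditDistanceGrammar.grammar Levenshtein.defaultCost M₁ M₂ N,
    EditDistanceGrammar.isLinearCFG_grammar _ _ _ _,
    EditDistanceGrammar.output_ne_nil_of_mem_rules_grammar _ _ _ _, ?_⟩
  rw [EditDistanceGrammar.language_grammar]
  ext w
  simp only [levenshtein_le_iff]
  constructor
  · rintro ⟨p, hx, hy, hp, rfl⟩
    exact ⟨_, _, hx, hy, ⟨p, rfl, rfl, hp⟩, rfl⟩
  · rintro ⟨_, _, hx, hy, ⟨p, rfl, rfl, hp⟩, rfl⟩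
    exact ⟨p, hx, hy, hp, rfl⟩
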